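/- arXiv:2511.12375 — 2 statements merged into one kernel-verified Lean document; each statement's English description precedes it below -/
import Mathlib

section
/- With the same setup as the grouping lemma, if u ∈ ℝ^K has the 'oracle structure' — i.e., u_k = 0 whenever β*_k = 0, u_k = u_j whenever β*_k = β*_j ≠ 0 within a common group, and u_k = −u_j whenever β*_k = −β*_j ≠ 0 within a common group — then G^T C_g u = u. -/
open Matrix Finset

/-- **Oracle-structure invariance.** If `u ∈ ℝ^K` has the oracle structure determined by the
signal-groups `G l` with signs `s` (i.e. `u k = 0` for ungrouped `k`, and
`s k * u k = s j * u j` for `k, j` in a common group), then `Gᵀ C_g u = u`. -/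
theorem oracle_structure_invariance
    {K L : ℕ} (G : Fin L → Finset (Fin K)) (s : Fin K → ℝ)
    (u : Fin K → ℝ)
    (hne : ∀ l, (G l).Nonempty)
    (hdisj : ∀ l l', l ≠ l' → Disjoint (G l) (G l'))
    (hs : ∀ k, s k = 1 ∨ s k = -1)
    (hu_out : ∀ k, (∀ l, k ∉ G l) → u k = 0)
    (hu_in : ∀ l, ∀ k ∈ G l, ∀ j ∈ G l, s k * u k = s j * u j)
    (sbar : Fin L → ℝ) (hsbar : ∀ l, sbar l = s ((G l).min' (hne l)))
    (Cg : Matrix (Fin L) (Fin K) ℝ)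
    (hCg : ∀ l k, Cg l k = if k ∈ G l then sbar l * s k / ((G l).card : ℝ) else 0)
    (Gm : Matrix (Fin L) (Fin K) ℝ)
    (hGm : ∀ l k, Gm l k = if k ∈ G l then sbar l * s k else 0) :
    (Gmᵀ * Cg) *ᵥ u = u := by
  have hs2 : ∀ k, s k * s k = 1 := by
    intro k; rcases hs k with h | h <;> rw [h] <;> norm_num
  have hsbar2 : ∀ l, sbar l * sbar l = 1 := by
    intro l; rw [hsbar]; exact hs2 _
  funext k
  rw [← mulVec_mulVec]
  have hrow : ∀ l, (Cg *ᵥ u) l = sbar l * s ((G l).min' (hne l)) *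
      u ((G l).min' (hne l)) := by
    intro l
    set m := (G l).min' (hne l) with hm
    have hmem : m ∈ G l := (G l).min'_mem (hne l)
    have hcard : ((G l).card : ℝ) ≠ 0 := by
      have := Finset.card_pos.mpr (hne l)
      positivity
    simp only [mulVec, dotProduct, hCg, ite_mul, zero_mul]
    rw [Finset.sum_ite_mem, Finset.univ_inter]
    have : ∀ j ∈ G l, sbar l * s j / ((G l).card : ℝ) * u j
        = sbar l * (s m * u m) / ((G l).card : ℝ) := by
      intro j hj
      rw [← hu_in l j hj m hmem]; ring
    rw [Finset.sum_congr rfl this, Finset.sum_const, nsmul_eq_mul]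
    field_simp
  simp only [mulVec, dotProduct] at hrow
  simp only [mulVec, dotProduct, transpose_apply, hGm, ite_mul, zero_mul]
  by_cases hk : ∃ l0, k ∈ G l0
  · obtain ⟨l0, hl0⟩ := hk
    rw [Finset.sum_eq_single l0]
    · rw [if_pos hl0, hrow l0]
      set m := (G l0).min' (hne l0) with hm
      have hmem : m ∈ G l0 := (G l0).min'_mem (hne l0)
      have h1 : s m * u m = s k * u k := hu_in l0 m hmem k hl0
      have h2 : sbar l0 = s m := hsbar l0
      rw [h2]
      rw [hs2 m]
      calc s m * s k * (1 * u m) = s k * (s m * u m) := by ring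
        _ = s k * (s k * u k) := by rw [h1]
        _ = u k := by rw [← mul_assoc, hs2 k, one_mul]
    · intro l _ hl
      rw [if_neg]
      intro hmem
      exact (Finset.disjoint_left.mp (hdisj l l0 hl) hmem) hl0
    · intro h; exact absurd (Finset.mem_univ l0) h
  · push_neg at hk
    rw [hu_out k hk]
    apply Finset.sum_eq_zero
    intro l _
    rw [if_neg (hk l)]
end

section
/- In the MVMR model, for each j define M_j = γ_j γ_j^T σ_{Yj}^{-2} and V_j = Σ_{Xj} σ_{Yj}^{-2}. Then Var(𝛾̂_j Γ̂_j σ_{Yj}^{-2} − 𝛾̂_j 𝛾̂_j^T σ_{Yj}^{-2} β* + V_j β*) = (1 + β*^T V_j β*)(M_j + V_j) + V_j β* β*^T V_j. -/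
open MeasureTheory ProbabilityTheory Matrix Finset

/-- A random vector is Gaussian with mean `m` and covariance `S` iff every linear functional
of it is a real Gaussian with the corresponding mean and variance. -/
def IsGaussianVec {Ω : Type*} [MeasurableSpace Ω] {K : ℕ} (μ : Measure Ω)
    (X : Ω → Fin K → ℝ) (m : Fin K → ℝ) (S : Matrix (Fin K) (Fin K) ℝ) : Prop :=
  ∀ a : Fin K → ℝ,
    Measure.map (fun ω => ∑ i, a i * X ω i) μ =
      gaussianReal (∑ i, a i * m i) (Real.toNNReal (a ⬝ᵥ S *ᵥ a))

section AuxGaussMoments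
open Real
open scoped NNReal ENNReal

lemma neg_one_lt_natCast (n : ℕ) : (-1 : ℝ) < (n : ℝ) :=
  lt_of_lt_of_le (by norm_num) (Nat.cast_nonneg n)

lemma integrable_pow_mul_gauss {b : ℝ} (hb : 0 < b) (n : ℕ) :
    Integrable (fun x : ℝ => x ^ n * Real.exp (-b * x ^ 2)) := by
  have h := integrable_rpow_mul_exp_neg_mul_sq hb (s := (n : ℝ)) (neg_one_lt_natCast n)
  simpa [Real.rpow_natCast] using h

lemma integral_pow_mul_gauss_odd {b : ℝ} {n : ℕ} (hn : Odd n) :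
    ∫ x : ℝ, x ^ n * Real.exp (-b * x ^ 2) = 0 := by
  have h := MeasureTheory.integral_neg_eq_self
    (fun x : ℝ => x ^ n * Real.exp (-b * x ^ 2)) volume
  simp only [hn.neg_pow, neg_sq, neg_mul, neg_neg] at h ⊢
  rw [MeasureTheory.integral_neg] at h
  linarith

lemma integral_Ioi_pow_mul_gauss {b : ℝ} (hb : 0 < b) (n : ℕ) :
    ∫ x in Set.Ioi (0:ℝ), x ^ n * Real.exp (-b * x ^ 2)
      = b ^ (-((n:ℝ) + 1) / 2) * (1 / 2) * Real.Gamma (((n:ℝ) + 1) / 2) := by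
  have h := integral_rpow_mul_exp_neg_mul_rpow (p := 2) (q := (n:ℝ)) (b := b)
    (by norm_num) (neg_one_lt_natCast n) hb
  rw [← h]
  refine setIntegral_congr_fun measurableSet_Ioi (fun x hx => ?_)
  rw [Real.rpow_natCast, show ((2:ℝ)) = ((2:ℕ):ℝ) by norm_num, Real.rpow_natCast]

lemma integral_pow_mul_gauss_even {b : ℝ} (hb : 0 < b) {n : ℕ} (hn : Even n) :
    ∫ x : ℝ, x ^ n * Real.exp (-b * x ^ 2)
      = 2 * (b ^ (-((n:ℝ) + 1) / 2) * (1 / 2) * Real.Gamma (((n:ℝ) + 1) / 2)) := by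
  rw [← integral_Ioi_pow_mul_gauss hb n,
    ← integral_comp_abs (f := fun x : ℝ => x ^ n * Real.exp (-b * x ^ 2))]
  congr 1 with x
  rw [hn.pow_abs, sq_abs]


lemma gauss_pdf_pull {t : ℝ} (ht : 0 < t) (n : ℕ) :
    ∫ x : ℝ, (Real.sqrt (2 * π * t))⁻¹ * Real.exp (-x ^ 2 / (2 * t)) * x ^ n
      = (Real.sqrt (2 * π * t))⁻¹ * ∫ x : ℝ, x ^ n * Real.exp (-(2 * t)⁻¹ * x ^ 2) := by
  rw [← MeasureTheory.integral_const_mul]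
  congr 1 with x
  rw [show -x ^ 2 / (2 * t) = -(2*t)⁻¹ * x ^ 2 by field_simp]
  ring

lemma sqrt_two_pi_t {t : ℝ} (ht : 0 < t) :
    Real.sqrt (2 * π * t) = Real.sqrt π * Real.sqrt (2*t) := by
  rw [← Real.sqrt_mul pi_nonneg]
  ring_nf

lemma Gamma_three_half : Real.Gamma (3/2) = Real.sqrt π / 2 := by
  have h := Real.Gamma_add_one (s := 1/2) (by norm_num)
  rw [show (1:ℝ)/2 + 1 = 3/2 by norm_num] at h
  rw [h, Real.Gamma_one_half_eq]; ring

lemma Gamma_five_half : Real.Gamma (5/2) = 3 * Real.sqrt π / 4 := by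
  have h := Real.Gamma_add_one (s := 3/2) (by norm_num)
  rw [show (3:ℝ)/2 + 1 = 5/2 by norm_num] at h
  rw [h, Gamma_three_half]; ring

lemma rpow_inv_neg_div {t : ℝ} (ht : 0 < t) (y : ℝ) :
    ((2*t)⁻¹ : ℝ) ^ (-y) = (2*t) ^ y := by
  rw [Real.inv_rpow (by linarith), Real.rpow_neg (by linarith), inv_inv]

lemma gauss_moment_two {t : ℝ} (ht : 0 < t) :
    ∫ x : ℝ, (Real.sqrt (2 * π * t))⁻¹ * Real.exp (-x ^ 2 / (2 * t)) * x ^ 2 = t := by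
  have hb : (0:ℝ) < (2*t)⁻¹ := by positivity
  rw [gauss_pdf_pull ht 2, integral_pow_mul_gauss_even hb (⟨1, by norm_num⟩ : Even 2)]
  have h1 : (-(((2:ℕ):ℝ) + 1) / 2) = -(3/2 : ℝ) := by norm_num
  rw [h1, rpow_inv_neg_div ht (3/2), show (((2:ℕ):ℝ)+1)/2 = 3/2 by norm_num,
    Gamma_three_half, sqrt_two_pi_t ht]
  have h2 : (2*t) ^ ((3:ℝ)/2) = (2*t) * Real.sqrt (2*t) := by
    rw [show (3:ℝ)/2 = 1 + 1/2 by norm_num, Real.rpow_add (by linarith), Real.rpow_one,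
      ← Real.sqrt_eq_rpow]
  rw [h2]
  have hπ : (0:ℝ) < Real.sqrt π := Real.sqrt_pos.mpr pi_pos
  have hs : (0:ℝ) < Real.sqrt (2*t) := Real.sqrt_pos.mpr (by linarith)
  field_simp

lemma gauss_moment_four {t : ℝ} (ht : 0 < t) :
    ∫ x : ℝ, (Real.sqrt (2 * π * t))⁻¹ * Real.exp (-x ^ 2 / (2 * t)) * x ^ 4 = 3 * t ^ 2 := by
  have hb : (0:ℝ) < (2*t)⁻¹ := by positivity
  rw [gauss_pdf_pull ht 4, integral_pow_mul_gauss_even hb (⟨2, by norm_num⟩ : Even 4)]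
  have h1 : (-(((4:ℕ):ℝ) + 1) / 2) = -(5/2 : ℝ) := by norm_num
  rw [h1, rpow_inv_neg_div ht (5/2), show (((4:ℕ):ℝ)+1)/2 = 5/2 by norm_num,
    Gamma_five_half, sqrt_two_pi_t ht]
  have h2 : (2*t) ^ ((5:ℝ)/2) = (2*t)^2 * Real.sqrt (2*t) := by
    rw [show (5:ℝ)/2 = 2 + 1/2 by norm_num, Real.rpow_add (by linarith),
      ← Real.sqrt_eq_rpow, show ((2:ℝ):ℝ) = ((2:ℕ):ℝ) by norm_num, Real.rpow_natCast]
  rw [h2]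
  have hπ : (0:ℝ) < Real.sqrt π := Real.sqrt_pos.mpr pi_pos
  have hs : (0:ℝ) < Real.sqrt (2*t) := Real.sqrt_pos.mpr (by linarith)
  field_simp
  ring

lemma gauss_moment_odd {t : ℝ} (ht : 0 < t) {n : ℕ} (hn : Odd n) :
    ∫ x : ℝ, (Real.sqrt (2 * π * t))⁻¹ * Real.exp (-x ^ 2 / (2 * t)) * x ^ n = 0 := by
  rw [gauss_pdf_pull ht n, integral_pow_mul_gauss_odd hn, mul_zero]


lemma integrable_dirac' {f : ℝ → ℝ} (hf : Measurable f) (a : ℝ) :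
    Integrable f (Measure.dirac a) := by
  refine ⟨hf.aestronglyMeasurable, ?_⟩
  have : HasFiniteIntegral f (Measure.dirac a) := by
    show (∫⁻ x, ‖f x‖₊ ∂Measure.dirac a) < ⊤
    rw [lintegral_dirac]
    exact ENNReal.coe_lt_top
  exact this

lemma gaussianPDF_coe (m : ℝ) (v : ℝ≥0) :
    (gaussianPDF m v) = fun x => ((Real.toNNReal (gaussianPDFReal m v x) : ℝ≥0) : ℝ≥0∞) := by
  funext x; rfl

lemma pdf_smul_eq {v : ℝ≥0} (hv : 0 < (v:ℝ)) (n : ℕ) (x : ℝ) :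
    (Real.toNNReal (gaussianPDFReal 0 v x) : ℝ) * x ^ n
      = (Real.sqrt (2 * π * (v:ℝ)))⁻¹ * Real.exp (-x ^ 2 / (2 * (v:ℝ))) * x ^ n := by
  rw [Real.coe_toNNReal _ (gaussianPDFReal_nonneg 0 v x), gaussianPDFReal]
  norm_num

lemma gaussianReal_centered_eq (v : ℝ≥0) (hv : v ≠ 0) (g : ℝ → ℝ) :
    ∫ x, g x ∂(gaussianReal 0 v) = ∫ x, (Real.toNNReal (gaussianPDFReal 0 v x) : ℝ) * g x := by
  rw [gaussianReal_of_var_ne_zero 0 hv, gaussianPDF_coe,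
    integral_withDensity_eq_integral_smul ((measurable_gaussianPDFReal 0 v).real_toNNReal) g]
  congr 1 with x
  try rw [NNReal.smul_def, smul_eq_mul]


lemma coe_pos_of_ne_zero {v : ℝ≥0} (hv : v ≠ 0) : (0:ℝ) < (v:ℝ) := by
  exact_mod_cast zero_lt_iff.mpr hv

lemma integrable_pow_gaussianReal_centered (v : ℝ≥0) (n : ℕ) :
    Integrable (fun x => x ^ n) (gaussianReal 0 v) := by
  by_cases hv : v = 0
  · rw [hv, gaussianReal_zero_var]; exact integrable_dirac' (measurable_id.pow_const _) 0
  have ht : (0:ℝ) < (v:ℝ) := coe_pos_of_ne_zero hv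
  have hb : (0:ℝ) < (2*(v:ℝ))⁻¹ := by positivity
  rw [gaussianReal_of_var_ne_zero 0 hv, gaussianPDF_coe,
    integrable_withDensity_iff_integrable_smul
      ((measurable_gaussianPDFReal 0 v).real_toNNReal)]
  refine ((integrable_pow_mul_gauss hb n).const_mul
      ((Real.sqrt (2 * π * (v:ℝ)))⁻¹)).congr (ae_of_all _ fun x => ?_)
  show _ = (gaussianPDFReal 0 v x).toNNReal • x ^ n
  rw [NNReal.smul_def, smul_eq_mul, pdf_smul_eq ht,
    show -x^2/(2*(v:ℝ)) = -(2*(v:ℝ))⁻¹ * x^2 by field_simp]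
  ring

lemma centered_moment_eq {v : ℝ≥0} (hv : v ≠ 0) (n : ℕ) :
    ∫ x, x ^ n ∂(gaussianReal 0 v)
      = ∫ x : ℝ, (Real.sqrt (2 * π * (v:ℝ)))⁻¹ * Real.exp (-x ^ 2 / (2 * (v:ℝ))) * x ^ n := by
  rw [gaussianReal_centered_eq v hv]
  congr 1 with x
  rw [pdf_smul_eq (coe_pos_of_ne_zero hv)]

lemma centered_moment_one (v : ℝ≥0) : ∫ x, x ^ 1 ∂(gaussianReal 0 v) = 0 := by
  by_cases hv : v = 0
  · rw [hv, gaussianReal_zero_var, integral_dirac]; norm_num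
  · rw [centered_moment_eq hv, gauss_moment_odd (coe_pos_of_ne_zero hv) ⟨0, by norm_num⟩]

lemma centered_moment_two (v : ℝ≥0) : ∫ x, x ^ 2 ∂(gaussianReal 0 v) = (v:ℝ) := by
  by_cases hv : v = 0
  · rw [hv, gaussianReal_zero_var, integral_dirac]; norm_num
  · rw [centered_moment_eq hv, gauss_moment_two (coe_pos_of_ne_zero hv)]

lemma centered_moment_three (v : ℝ≥0) : ∫ x, x ^ 3 ∂(gaussianReal 0 v) = 0 := by
  by_cases hv : v = 0
  · rw [hv, gaussianReal_zero_var, integral_dirac]; norm_num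
  · rw [centered_moment_eq hv, gauss_moment_odd (coe_pos_of_ne_zero hv) ⟨1, by norm_num⟩]

lemma centered_moment_four (v : ℝ≥0) :
    ∫ x, x ^ 4 ∂(gaussianReal 0 v) = 3 * (v:ℝ) ^ 2 := by
  by_cases hv : v = 0
  · rw [hv, gaussianReal_zero_var, integral_dirac]; norm_num
  · rw [centered_moment_eq hv, gauss_moment_four (coe_pos_of_ne_zero hv)]
lemma gaussianReal_eq_map (m : ℝ) (v : ℝ≥0) :
    gaussianReal m v = Measure.map (fun x => x + m) (gaussianReal 0 v) := by
  rw [gaussianReal_map_add_const, zero_add]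

lemma integrable_pow_gaussianReal (m : ℝ) (v : ℝ≥0) (n : ℕ) :
    Integrable (fun x => x ^ n) (gaussianReal m v) := by
  rw [gaussianReal_eq_map m v]
  have hcomp : Integrable ((fun x : ℝ => x ^ n) ∘ (fun x => x + m)) (gaussianReal 0 v) := by
    have e : ((fun x : ℝ => x ^ n) ∘ (fun x => x + m))
        = fun x : ℝ => ∑ j ∈ Finset.range (n+1), x ^ j * (m ^ (n - j) * (n.choose j : ℝ)) := by
      funext x
      simp [Function.comp, add_pow, mul_assoc]
    rw [e]
    exact MeasureTheory.integrable_finset_sum _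
      (fun j _ => (integrable_pow_gaussianReal_centered v j).mul_const _)
  exact (integrable_map_measure (g := fun x : ℝ => x ^ n)
    ((measurable_id.pow_const n).aestronglyMeasurable)
    ((measurable_id.add_const m).aemeasurable)).mpr hcomp

lemma gaussianReal_pow_eq (m : ℝ) (v : ℝ≥0) (n : ℕ) :
    ∫ x, x ^ n ∂(gaussianReal m v) = ∫ x, (x + m) ^ n ∂(gaussianReal 0 v) := by
  rw [gaussianReal_eq_map m v]
  exact integral_map (φ := fun x : ℝ => x + m) (f := fun x : ℝ => x ^ n)
    ((measurable_id.add_const m).aemeasurable)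
    ((measurable_id.pow_const n).aestronglyMeasurable)

lemma gaussianReal_moment_one (m : ℝ) (v : ℝ≥0) :
    ∫ x, x ^ 1 ∂(gaussianReal m v) = m := by
  rw [gaussianReal_pow_eq]
  have I1 := integrable_pow_gaussianReal_centered v 1
  have e : ∀ x : ℝ, (x + m) ^ 1 = x ^ 1 + m := by intro x; ring
  simp_rw [e]
  rw [integral_add I1 (integrable_const _), centered_moment_one, integral_const]
  simp

lemma gaussianReal_moment_two (m : ℝ) (v : ℝ≥0) :
    ∫ x, x ^ 2 ∂(gaussianReal m v) = (v:ℝ) + m ^ 2 := by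
  rw [gaussianReal_pow_eq]
  have I1 := integrable_pow_gaussianReal_centered v 1
  have I2 := integrable_pow_gaussianReal_centered v 2
  have h1 : Integrable (fun x : ℝ => (2*m) * x ^ 1 + m ^ 2) (gaussianReal 0 v) :=
    (I1.const_mul _).add (integrable_const _)
  have e : ∀ x : ℝ, (x + m) ^ 2 = x ^ 2 + ((2*m) * x ^ 1 + m ^ 2) := by intro x; ring
  simp_rw [e]
  rw [integral_add I2 h1, integral_add (I1.const_mul _) (integrable_const _),
    integral_const_mul, centered_moment_one, centered_moment_two, integral_const]
  simp

lemma gaussianReal_moment_three (m : ℝ) (v : ℝ≥0) :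
    ∫ x, x ^ 3 ∂(gaussianReal m v) = m ^ 3 + 3 * m * (v:ℝ) := by
  rw [gaussianReal_pow_eq]
  have I1 := integrable_pow_gaussianReal_centered v 1
  have I2 := integrable_pow_gaussianReal_centered v 2
  have I3 := integrable_pow_gaussianReal_centered v 3
  have h1 : Integrable (fun x : ℝ => (3*m^2) * x ^ 1 + m ^ 3) (gaussianReal 0 v) :=
    (I1.const_mul _).add (integrable_const _)
  have h2 : Integrable (fun x : ℝ => (3*m) * x ^ 2 + ((3*m^2) * x ^ 1 + m ^ 3))
      (gaussianReal 0 v) := (I2.const_mul _).add h1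
  have e : ∀ x : ℝ, (x + m) ^ 3 = x ^ 3 + ((3*m) * x ^ 2 + ((3*m^2) * x ^ 1 + m ^ 3)) := by
    intro x; ring
  simp_rw [e]
  rw [integral_add I3 h2, integral_add (I2.const_mul _) h1,
    integral_add (I1.const_mul _) (integrable_const _), integral_const_mul, integral_const_mul,
    centered_moment_one, centered_moment_two, centered_moment_three, integral_const]
  simp
  ring

lemma gaussianReal_moment_four (m : ℝ) (v : ℝ≥0) :
    ∫ x, x ^ 4 ∂(gaussianReal m v) = m ^ 4 + 6 * m ^ 2 * (v:ℝ) + 3 * (v:ℝ) ^ 2 := by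
  rw [gaussianReal_pow_eq]
  have I1 := integrable_pow_gaussianReal_centered v 1
  have I2 := integrable_pow_gaussianReal_centered v 2
  have I3 := integrable_pow_gaussianReal_centered v 3
  have I4 := integrable_pow_gaussianReal_centered v 4
  have h1 : Integrable (fun x : ℝ => (4*m^3) * x ^ 1 + m ^ 4) (gaussianReal 0 v) :=
    (I1.const_mul _).add (integrable_const _)
  have h2 : Integrable (fun x : ℝ => (6*m^2) * x ^ 2 + ((4*m^3) * x ^ 1 + m ^ 4))
      (gaussianReal 0 v) := (I2.const_mul _).add h1
  have h3 : Integrable (fun x : ℝ => (4*m) * x ^ 3 + ((6*m^2) * x ^ 2 + ((4*m^3) * x ^ 1 + m ^ 4)))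
      (gaussianReal 0 v) := (I3.const_mul _).add h2
  have e : ∀ x : ℝ, (x + m) ^ 4
      = x ^ 4 + ((4*m) * x ^ 3 + ((6*m^2) * x ^ 2 + ((4*m^3) * x ^ 1 + m ^ 4))) := by
    intro x; ring
  simp_rw [e]
  rw [integral_add I4 h3, integral_add (I3.const_mul _) h2, integral_add (I2.const_mul _) h1,
    integral_add (I1.const_mul _) (integrable_const _), integral_const_mul, integral_const_mul,
    integral_const_mul, centered_moment_one, centered_moment_two, centered_moment_three,
    centered_moment_four, integral_const]
  simp
  ring


end AuxGaussMoments

section AuxVec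

open Matrix in
noncomputable section

variable {Ω : Type*} [MeasurableSpace Ω] {K : ℕ}

/-- Linear functional of a random vector. -/
def Lf (X : Ω → Fin K → ℝ) (a : Fin K → ℝ) (ω : Ω) : ℝ := ∑ i, a i * X ω i

/-- Mean of a linear functional. -/
def mf (γ : Fin K → ℝ) (a : Fin K → ℝ) : ℝ := ∑ i, a i * γ i

/-- Quadratic form. -/
def qf (SX : Matrix (Fin K) (Fin K) ℝ) (a b : Fin K → ℝ) : ℝ := a ⬝ᵥ SX *ᵥ b

lemma Lf_add (X : Ω → Fin K → ℝ) (a b : Fin K → ℝ) (ω : Ω) :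
    Lf X (a + b) ω = Lf X a ω + Lf X b ω := by
  simp [Lf, add_mul, Finset.sum_add_distrib]

lemma Lf_sub (X : Ω → Fin K → ℝ) (a b : Fin K → ℝ) (ω : Ω) :
    Lf X (a - b) ω = Lf X a ω - Lf X b ω := by
  simp [Lf, sub_mul, Finset.sum_sub_distrib]

lemma mf_add (γ a b : Fin K → ℝ) : mf γ (a + b) = mf γ a + mf γ b := by
  simp [mf, add_mul, Finset.sum_add_distrib]

lemma mf_sub (γ a b : Fin K → ℝ) : mf γ (a - b) = mf γ a - mf γ b := by
  simp [mf, sub_mul, Finset.sum_sub_distrib]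

lemma qf_add_left (SX : Matrix (Fin K) (Fin K) ℝ) (a b c : Fin K → ℝ) :
    qf SX (a + b) c = qf SX a c + qf SX b c := by
  simp [qf, add_dotProduct]

lemma qf_sub_left (SX : Matrix (Fin K) (Fin K) ℝ) (a b c : Fin K → ℝ) :
    qf SX (a - b) c = qf SX a c - qf SX b c := by
  simp [qf, sub_dotProduct]

lemma qf_add_right (SX : Matrix (Fin K) (Fin K) ℝ) (a b c : Fin K → ℝ) :
    qf SX a (b + c) = qf SX a b + qf SX a c := by
  simp [qf, mulVec_add, dotProduct_add]

lemma qf_sub_right (SX : Matrix (Fin K) (Fin K) ℝ) (a b c : Fin K → ℝ) :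
    qf SX a (b - c) = qf SX a b - qf SX a c := by
  simp [qf, mulVec_sub, dotProduct_sub]

lemma qf_symm {SX : Matrix (Fin K) (Fin K) ℝ} (hs : SXᵀ = SX) (a b : Fin K → ℝ) :
    qf SX a b = qf SX b a := by
  unfold qf
  rw [dotProduct_mulVec, ← mulVec_transpose, hs, dotProduct_comm]

lemma psd_transpose_eq {SX : Matrix (Fin K) (Fin K) ℝ} (hSX : SX.PosSemidef) : SXᵀ = SX := by
  have h := hSX.1
  rw [Matrix.IsHermitian] at h
  rwa [Matrix.conjTranspose_eq_transpose_of_trivial] at h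

lemma qf_self_nonneg {SX : Matrix (Fin K) (Fin K) ℝ} (hSX : SX.PosSemidef) (a : Fin K → ℝ) :
    0 ≤ qf SX a a := by
  have h := hSX.dotProduct_mulVec_nonneg a
  simpa [qf, star_trivial] using h

variable {μ : Measure Ω} [IsProbabilityMeasure μ]
  {X : Ω → Fin K → ℝ} {γ : Fin K → ℝ} {SX : Matrix (Fin K) (Fin K) ℝ}

lemma Lf_meas (hX : Measurable X) (a : Fin K → ℝ) : Measurable (Lf X a) := by
  apply Finset.measurable_sum
  intro i _
  exact ((measurable_pi_apply i).comp hX).const_mul (a i)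

lemma Lf_map (hγ : IsGaussianVec μ X γ SX) (a : Fin K → ℝ) :
    Measure.map (Lf X a) μ = gaussianReal (mf γ a) (Real.toNNReal (qf SX a a)) := hγ a

lemma Lf_pow_integrable (hX : Measurable X) (hγ : IsGaussianVec μ X γ SX)
    (a : Fin K → ℝ) (n : ℕ) : Integrable (fun ω => Lf X a ω ^ n) μ := by
  have h : Integrable (fun x => x ^ n) (Measure.map (Lf X a) μ) := by
    rw [Lf_map hγ a]; exact integrable_pow_gaussianReal _ _ n
  exact (integrable_map_measure (g := fun x : ℝ => x ^ n)
    ((measurable_id.pow_const n).aestronglyMeasurable)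
    (Lf_meas hX a).aemeasurable).mp h

lemma Lf_pow_moment (hX : Measurable X) (hγ : IsGaussianVec μ X γ SX)
    (a : Fin K → ℝ) (n : ℕ) :
    ∫ ω, Lf X a ω ^ n ∂μ = ∫ x, x ^ n ∂(gaussianReal (mf γ a) (Real.toNNReal (qf SX a a))) := by
  rw [← Lf_map hγ a]
  exact (integral_map (φ := Lf X a) (f := fun x : ℝ => x ^ n)
    (Lf_meas hX a).aemeasurable ((measurable_id.pow_const n).aestronglyMeasurable)).symm

variable (hX : Measurable X) (hγ : IsGaussianVec μ X γ SX) (hSX : SX.PosSemidef)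
include hX hγ hSX

lemma Lf_moment_one (a : Fin K → ℝ) : ∫ ω, Lf X a ω ^ 1 ∂μ = mf γ a := by
  rw [Lf_pow_moment hX hγ, gaussianReal_moment_one]

lemma Lf_moment_two (a : Fin K → ℝ) :
    ∫ ω, Lf X a ω ^ 2 ∂μ = qf SX a a + (mf γ a) ^ 2 := by
  rw [Lf_pow_moment hX hγ, gaussianReal_moment_two,
    Real.coe_toNNReal _ (qf_self_nonneg hSX a)]

lemma Lf_moment_three (a : Fin K → ℝ) :
    ∫ ω, Lf X a ω ^ 3 ∂μ = (mf γ a) ^ 3 + 3 * mf γ a * qf SX a a := by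
  rw [Lf_pow_moment hX hγ, gaussianReal_moment_three,
    Real.coe_toNNReal _ (qf_self_nonneg hSX a)]

lemma Lf_moment_four (a : Fin K → ℝ) :
    ∫ ω, Lf X a ω ^ 4 ∂μ
      = (mf γ a) ^ 4 + 6 * (mf γ a) ^ 2 * qf SX a a + 3 * (qf SX a a) ^ 2 := by
  rw [Lf_pow_moment hX hγ, gaussianReal_moment_four,
    Real.coe_toNNReal _ (qf_self_nonneg hSX a)]
lemma Lf_mul_integrable (a b : Fin K → ℝ) :
    Integrable (fun ω => Lf X a ω * Lf X b ω) μ := by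
  have h : Integrable (fun ω => (Lf X (a+b) ω ^ 2 - Lf X (a-b) ω ^ 2) / 4) μ :=
    ((Lf_pow_integrable hX hγ (a+b) 2).sub (Lf_pow_integrable hX hγ (a-b) 2)).div_const 4
  refine h.congr (ae_of_all _ fun ω => ?_)
  simp only [Lf_add, Lf_sub]
  ring

lemma Lf_mul_moment (a b : Fin K → ℝ) :
    ∫ ω, Lf X a ω * Lf X b ω ∂μ = qf SX a b + mf γ a * mf γ b := by
  have e : ∀ ω, Lf X a ω * Lf X b ω
      = (Lf X (a+b) ω ^ 2 - Lf X (a-b) ω ^ 2) / 4 := by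
    intro ω; simp only [Lf_add, Lf_sub]; ring
  simp_rw [e]
  rw [integral_div, integral_sub (Lf_pow_integrable hX hγ (a+b) 2)
      (Lf_pow_integrable hX hγ (a-b) 2),
    Lf_moment_two hX hγ hSX, Lf_moment_two hX hγ hSX]
  simp only [mf_add, mf_sub, qf_add_left, qf_sub_left, qf_add_right, qf_sub_right]
  rw [qf_symm (psd_transpose_eq hSX) b a]
  ring

lemma Lf_mul3_integrable (a b c : Fin K → ℝ) :
    Integrable (fun ω => Lf X a ω * Lf X b ω * Lf X c ω) μ := by
  have h : Integrable (fun ω =>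
      (Lf X (a+b+c) ω ^ 3 - Lf X (a+b-c) ω ^ 3 - Lf X (a-b+c) ω ^ 3
        + Lf X (a-b-c) ω ^ 3) / 24) μ :=
    ((((Lf_pow_integrable hX hγ (a+b+c) 3).sub (Lf_pow_integrable hX hγ (a+b-c) 3)).sub
      (Lf_pow_integrable hX hγ (a-b+c) 3)).add (Lf_pow_integrable hX hγ (a-b-c) 3)).div_const 24
  refine h.congr (ae_of_all _ fun ω => ?_)
  simp only [Lf_add, Lf_sub]
  ring

lemma Lf_mul3_moment (a b c : Fin K → ℝ) :
    ∫ ω, Lf X a ω * Lf X b ω * Lf X c ω ∂μ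
      = mf γ a * mf γ b * mf γ c + mf γ a * qf SX b c + mf γ b * qf SX a c
        + mf γ c * qf SX a b := by
  have e : ∀ ω, Lf X a ω * Lf X b ω * Lf X c ω
      = (Lf X (a+b+c) ω ^ 3 - Lf X (a+b-c) ω ^ 3 - Lf X (a-b+c) ω ^ 3
        + Lf X (a-b-c) ω ^ 3) / 24 := by
    intro ω; simp only [Lf_add, Lf_sub]; ring
  have i1 := Lf_pow_integrable hX hγ (a+b+c) 3
  have i2 := Lf_pow_integrable hX hγ (a+b-c) 3
  have i3 := Lf_pow_integrable hX hγ (a-b+c) 3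
  have i4 := Lf_pow_integrable hX hγ (a-b-c) 3
  have i12 : Integrable (fun ω => Lf X (a+b+c) ω ^ 3 - Lf X (a+b-c) ω ^ 3) μ := i1.sub i2
  have i123 : Integrable (fun ω => Lf X (a+b+c) ω ^ 3 - Lf X (a+b-c) ω ^ 3
      - Lf X (a-b+c) ω ^ 3) μ := i12.sub i3
  simp_rw [e]
  rw [integral_div, integral_add i123 i4, integral_sub i12 i3, integral_sub i1 i2,
    Lf_moment_three hX hγ hSX, Lf_moment_three hX hγ hSX, Lf_moment_three hX hγ hSX,
    Lf_moment_three hX hγ hSX]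
  simp only [mf_add, mf_sub, qf_add_left, qf_sub_left, qf_add_right, qf_sub_right]
  rw [qf_symm (psd_transpose_eq hSX) b a, qf_symm (psd_transpose_eq hSX) c a,
    qf_symm (psd_transpose_eq hSX) c b]
  ring

lemma Lf_mul2sq_integrable (a b c : Fin K → ℝ) :
    Integrable (fun ω => Lf X a ω * Lf X b ω * Lf X c ω ^ 2) μ := by
  have h : Integrable (fun ω =>
      (Lf X (a+b+c) ω ^ 4 + Lf X (a+b-c) ω ^ 4 - 2 * Lf X (a+b) ω ^ 4
        - Lf X (a-b+c) ω ^ 4 - Lf X (a-b-c) ω ^ 4 + 2 * Lf X (a-b) ω ^ 4) / 48) μ :=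
    ((((((Lf_pow_integrable hX hγ (a+b+c) 4).add (Lf_pow_integrable hX hγ (a+b-c) 4)).sub
      ((Lf_pow_integrable hX hγ (a+b) 4).const_mul 2)).sub
      (Lf_pow_integrable hX hγ (a-b+c) 4)).sub (Lf_pow_integrable hX hγ (a-b-c) 4)).add
      ((Lf_pow_integrable hX hγ (a-b) 4).const_mul 2)).div_const 48
  refine h.congr (ae_of_all _ fun ω => ?_)
  simp only [Lf_add, Lf_sub]
  ring

lemma Lf_mul2sq_moment (a b c : Fin K → ℝ) :
    ∫ ω, Lf X a ω * Lf X b ω * Lf X c ω ^ 2 ∂μ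
      = qf SX a b * qf SX c c + 2 * qf SX a c * qf SX b c
        + mf γ a * mf γ b * qf SX c c + 2 * mf γ a * mf γ c * qf SX b c
        + 2 * mf γ b * mf γ c * qf SX a c + mf γ c ^ 2 * qf SX a b
        + mf γ a * mf γ b * mf γ c ^ 2 := by
  have e : ∀ ω, Lf X a ω * Lf X b ω * Lf X c ω ^ 2
      = (Lf X (a+b+c) ω ^ 4 + Lf X (a+b-c) ω ^ 4 - 2 * Lf X (a+b) ω ^ 4
        - Lf X (a-b+c) ω ^ 4 - Lf X (a-b-c) ω ^ 4 + 2 * Lf X (a-b) ω ^ 4) / 48 := by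
    intro ω; simp only [Lf_add, Lf_sub]; ring
  have i1 := Lf_pow_integrable hX hγ (a+b+c) 4
  have i2 := Lf_pow_integrable hX hγ (a+b-c) 4
  have i3 : Integrable (fun ω => 2 * Lf X (a+b) ω ^ 4) μ :=
    (Lf_pow_integrable hX hγ (a+b) 4).const_mul 2
  have i4 := Lf_pow_integrable hX hγ (a-b+c) 4
  have i5 := Lf_pow_integrable hX hγ (a-b-c) 4
  have i6 : Integrable (fun ω => 2 * Lf X (a-b) ω ^ 4) μ :=
    (Lf_pow_integrable hX hγ (a-b) 4).const_mul 2
  have i12 : Integrable (fun ω => Lf X (a+b+c) ω ^ 4 + Lf X (a+b-c) ω ^ 4) μ := i1.add i2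
  have i13 : Integrable (fun ω => Lf X (a+b+c) ω ^ 4 + Lf X (a+b-c) ω ^ 4
      - 2 * Lf X (a+b) ω ^ 4) μ := i12.sub i3
  have i14 : Integrable (fun ω => Lf X (a+b+c) ω ^ 4 + Lf X (a+b-c) ω ^ 4
      - 2 * Lf X (a+b) ω ^ 4 - Lf X (a-b+c) ω ^ 4) μ := i13.sub i4
  have i15 : Integrable (fun ω => Lf X (a+b+c) ω ^ 4 + Lf X (a+b-c) ω ^ 4
      - 2 * Lf X (a+b) ω ^ 4 - Lf X (a-b+c) ω ^ 4 - Lf X (a-b-c) ω ^ 4) μ := i14.sub i5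
  simp_rw [e]
  rw [integral_div, integral_add i15 i6, integral_sub i14 i5, integral_sub i13 i4,
    integral_sub i12 i3, integral_add i1 i2, integral_const_mul, integral_const_mul,
    Lf_moment_four hX hγ hSX, Lf_moment_four hX hγ hSX, Lf_moment_four hX hγ hSX,
    Lf_moment_four hX hγ hSX, Lf_moment_four hX hγ hSX, Lf_moment_four hX hγ hSX]
  simp only [mf_add, mf_sub, qf_add_left, qf_sub_left, qf_add_right, qf_sub_right]
  rw [qf_symm (psd_transpose_eq hSX) b a, qf_symm (psd_transpose_eq hSX) c a,
    qf_symm (psd_transpose_eq hSX) c b]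
  ring

lemma Lf_integrable' (a : Fin K → ℝ) : Integrable (Lf X a) μ := by
  have h := Lf_pow_integrable hX hγ a 1
  simpa [pow_one] using h

lemma Lf_moment_one' (a : Fin K → ℝ) : ∫ ω, Lf X a ω ∂μ = mf γ a := by
  have h := Lf_moment_one hX hγ hSX a
  simpa [pow_one] using h

end

section Collapse

variable {K : ℕ}
open Matrix

lemma mf_single (γ : Fin K → ℝ) (k : Fin K) : mf γ (Pi.single k 1) = γ k := by
  simp [mf, Pi.single_apply]

lemma mf_dot (γ b : Fin K → ℝ) : mf γ b = γ ⬝ᵥ b := by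
  simp [mf, dotProduct, mul_comm]

lemma qf_single_vec (SX : Matrix (Fin K) (Fin K) ℝ) (k : Fin K) (b : Fin K → ℝ) :
    qf SX (Pi.single k 1) b = (SX *ᵥ b) k := by
  simp [qf, dotProduct, Pi.single_apply]

lemma qf_single_single (SX : Matrix (Fin K) (Fin K) ℝ) (k l : Fin K) :
    qf SX (Pi.single k 1) (Pi.single l 1) = SX k l := by
  rw [qf_single_vec]
  simp [mulVec, dotProduct, Pi.single_apply]

lemma Lf_single {Ω : Type*} (X : Ω → Fin K → ℝ) (k : Fin K) (ω : Ω) :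
    Lf X (Pi.single k 1) ω = X ω k := by
  simp [Lf, Pi.single_apply]

end Collapse

end AuxVec


/-- **Covariance of the score vector.** For independent `γ̂ ~ N(γ, Σ_X)` and
`Γ̂ ~ N(γᵀβ*, σ_Y²)`, with `M = γγᵀσ_Y⁻²` and `V = Σ_X σ_Y⁻²`, the covariance matrix of
`Y = γ̂ Γ̂ σ_Y⁻² − γ̂ γ̂ᵀ σ_Y⁻² β* + V β*` equals
`(1 + β*ᵀVβ*)(M + V) + Vβ*β*ᵀV`. -/
theorem score_vector_covariance
    {Ω : Type*} [MeasurableSpace Ω] (μ : Measure Ω) [IsProbabilityMeasure μ]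
    {K : ℕ}
    (ghat : Ω → Fin K → ℝ) (Ghat : Ω → ℝ)
    (γ : Fin K → ℝ) (SX : Matrix (Fin K) (Fin K) ℝ) (σY : ℝ) (βstar : Fin K → ℝ)
    (hγmeas : Measurable ghat) (hΓmeas : Measurable Ghat)
    (hSX : SX.PosSemidef) (hσY : 0 < σY)
    (hγ : IsGaussianVec μ ghat γ SX)
    (hΓ : Measure.map Ghat μ = gaussianReal (γ ⬝ᵥ βstar) (Real.toNNReal (σY ^ 2)))
    (hindep : IndepFun ghat Ghat μ)
    (Mm V : Matrix (Fin K) (Fin K) ℝ)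
    (hMm : Mm = (σY ^ 2)⁻¹ • vecMulVec γ γ)
    (hV : V = (σY ^ 2)⁻¹ • SX)
    (Y : Ω → Fin K → ℝ)
    (hY : ∀ ω k, Y ω k =
      ghat ω k * Ghat ω / σY ^ 2 - (∑ l, ghat ω k * ghat ω l * βstar l) / σY ^ 2
        + (V *ᵥ βstar) k) :
    ∀ k l : Fin K,
      (∫ ω, (Y ω k - ∫ ω', Y ω' k ∂μ) * (Y ω l - ∫ ω', Y ω' l ∂μ) ∂μ)
        = (1 + βstar ⬝ᵥ V *ᵥ βstar) * (Mm + V) k l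
          + (V *ᵥ βstar) k * (βstar ᵥ* V) l := by
  intro k l
  have hs : σY ^ 2 ≠ 0 := pow_ne_zero 2 hσY.ne'
  have hts : SXᵀ = SX := psd_transpose_eq hSX
  -- moments of Ghat
  have iZ : ∀ n : ℕ, Integrable (fun ω => Ghat ω ^ n) μ := by
    intro n
    have h : Integrable (fun x => x ^ n) (Measure.map Ghat μ) := by
      rw [hΓ]; exact integrable_pow_gaussianReal _ _ n
    exact (integrable_map_measure (g := fun x : ℝ => x ^ n)
      ((measurable_id.pow_const n).aestronglyMeasurable) hΓmeas.aemeasurable).mp h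
  have hZmom : ∀ n : ℕ, ∫ ω, Ghat ω ^ n ∂μ
      = ∫ x, x ^ n ∂(gaussianReal (γ ⬝ᵥ βstar) (Real.toNNReal (σY ^ 2))) := by
    intro n
    rw [← hΓ]
    exact (integral_map hΓmeas.aemeasurable
      ((measurable_id.pow_const n).aestronglyMeasurable)).symm
  have hZ1 : ∫ ω, Ghat ω ^ 1 ∂μ = γ ⬝ᵥ βstar := by
    rw [hZmom 1, gaussianReal_moment_one]
  have hZ2 : ∫ ω, Ghat ω ^ 2 ∂μ = σY ^ 2 + (γ ⬝ᵥ βstar) ^ 2 := by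
    rw [hZmom 2, gaussianReal_moment_two, Real.coe_toNNReal _ (sq_nonneg σY)]
  -- independence helpers
  have mφ : ∀ a : Fin K → ℝ, Measurable (fun x : Fin K → ℝ => ∑ i, a i * x i) :=
    fun a => Finset.measurable_sum _ (fun i _ => (measurable_pi_apply i).const_mul _)
  have hmulE1 : ∀ (a : Fin K → ℝ) (n : ℕ),
      ∫ ω, Lf ghat a ω * Ghat ω ^ n ∂μ
        = (∫ ω, Lf ghat a ω ∂μ) * ∫ ω, Ghat ω ^ n ∂μ := by
    intro a n
    have hind : IndepFun (fun ω => Lf ghat a ω) (fun ω => Ghat ω ^ n) μ :=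
      hindep.comp (φ := fun x : Fin K → ℝ => ∑ i, a i * x i) (mφ a)
        (measurable_id.pow_const n)
    exact IndepFun.integral_fun_mul_eq_mul_integral hind (Lf_meas hγmeas a).aestronglyMeasurable
      ((hΓmeas.pow_const n).aestronglyMeasurable)
  have hmulE2 : ∀ (a b : Fin K → ℝ) (n : ℕ),
      ∫ ω, Lf ghat a ω * Lf ghat b ω * Ghat ω ^ n ∂μ
        = (∫ ω, Lf ghat a ω * Lf ghat b ω ∂μ) * ∫ ω, Ghat ω ^ n ∂μ := by
    intro a b n
    have hind : IndepFun (fun ω => Lf ghat a ω * Lf ghat b ω) (fun ω => Ghat ω ^ n) μ :=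
      hindep.comp (φ := fun x : Fin K → ℝ => (∑ i, a i * x i) * (∑ i, b i * x i))
        ((mφ a).mul (mφ b)) (measurable_id.pow_const n)
    exact IndepFun.integral_fun_mul_eq_mul_integral hind ((Lf_meas hγmeas a).mul (Lf_meas hγmeas b)).aestronglyMeasurable
      ((hΓmeas.pow_const n).aestronglyMeasurable)
  have hmulE3 : ∀ (a b c : Fin K → ℝ) (n : ℕ),
      ∫ ω, Lf ghat a ω * Lf ghat b ω * Lf ghat c ω * Ghat ω ^ n ∂μ
        = (∫ ω, Lf ghat a ω * Lf ghat b ω * Lf ghat c ω ∂μ) * ∫ ω, Ghat ω ^ n ∂μ := by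
    intro a b c n
    have hind : IndepFun (fun ω => Lf ghat a ω * Lf ghat b ω * Lf ghat c ω)
        (fun ω => Ghat ω ^ n) μ :=
      hindep.comp
        (φ := fun x : Fin K → ℝ => (∑ i, a i * x i) * (∑ i, b i * x i) * (∑ i, c i * x i))
        (((mφ a).mul (mφ b)).mul (mφ c)) (measurable_id.pow_const n)
    exact IndepFun.integral_fun_mul_eq_mul_integral hind (((Lf_meas hγmeas a).mul (Lf_meas hγmeas b)).mul
      (Lf_meas hγmeas c)).aestronglyMeasurable ((hΓmeas.pow_const n).aestronglyMeasurable)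
  have hmulI1 : ∀ (a : Fin K → ℝ) (n : ℕ),
      Integrable (fun ω => Lf ghat a ω * Ghat ω ^ n) μ := by
    intro a n
    have hind : IndepFun (fun ω => Lf ghat a ω) (fun ω => Ghat ω ^ n) μ :=
      hindep.comp (φ := fun x : Fin K → ℝ => ∑ i, a i * x i) (mφ a)
        (measurable_id.pow_const n)
    exact IndepFun.integrable_mul hind (Lf_integrable' hγmeas hγ hSX a) (iZ n)
  have hmulI2 : ∀ (a b : Fin K → ℝ) (n : ℕ),
      Integrable (fun ω => Lf ghat a ω * Lf ghat b ω * Ghat ω ^ n) μ := by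
    intro a b n
    have hind : IndepFun (fun ω => Lf ghat a ω * Lf ghat b ω) (fun ω => Ghat ω ^ n) μ :=
      hindep.comp (φ := fun x : Fin K → ℝ => (∑ i, a i * x i) * (∑ i, b i * x i))
        ((mφ a).mul (mφ b)) (measurable_id.pow_const n)
    exact IndepFun.integrable_mul hind (Lf_mul_integrable hγmeas hγ hSX a b) (iZ n)
  have hmulI3 : ∀ (a b c : Fin K → ℝ) (n : ℕ),
      Integrable (fun ω => Lf ghat a ω * Lf ghat b ω * Lf ghat c ω * Ghat ω ^ n) μ := by
    intro a b c n
    have hind : IndepFun (fun ω => Lf ghat a ω * Lf ghat b ω * Lf ghat c ω)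
        (fun ω => Ghat ω ^ n) μ :=
      hindep.comp
        (φ := fun x : Fin K → ℝ => (∑ i, a i * x i) * (∑ i, b i * x i) * (∑ i, c i * x i))
        (((mφ a).mul (mφ b)).mul (mφ c)) (measurable_id.pow_const n)
    exact IndepFun.integrable_mul hind (Lf_mul3_integrable hγmeas hγ hSX a b c) (iZ n)
  have hVb : ∀ j : Fin K, (V *ᵥ βstar) j = (σY ^ 2)⁻¹ * (SX *ᵥ βstar) j := by
    intro j; rw [hV, Matrix.smul_mulVec]; simp
  -- the mean of Y is zero
  have hEY : ∀ j : Fin K, (∫ ω, Y ω j ∂μ) = 0 := by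
    intro j
    have e : ∀ ω, Y ω j = (Lf ghat (Pi.single j 1) ω * Ghat ω ^ 1) * (σY ^ 2)⁻¹
        - (Lf ghat (Pi.single j 1) ω * Lf ghat βstar ω) * (σY ^ 2)⁻¹ + (V *ᵥ βstar) j := by
      intro ω
      rw [hY ω j]
      have h2 : (∑ m, ghat ω j * ghat ω m * βstar m) = ghat ω j * Lf ghat βstar ω := by
        rw [Lf, Finset.mul_sum]
        exact Finset.sum_congr rfl (fun i _ => by ring)
      rw [h2]
      simp only [Lf_single]
      ring
    have iT4 : Integrable (fun ω => Lf ghat (Pi.single j 1) ω * Ghat ω ^ 1) μ :=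
      hmulI1 (Pi.single j 1) 1
    have iT6 : Integrable (fun ω => Lf ghat (Pi.single j 1) ω * Lf ghat βstar ω) μ :=
      Lf_mul_integrable hγmeas hγ hSX _ _
    have isub : Integrable (fun ω => (Lf ghat (Pi.single j 1) ω * Ghat ω ^ 1) * (σY ^ 2)⁻¹
        - (Lf ghat (Pi.single j 1) ω * Lf ghat βstar ω) * (σY ^ 2)⁻¹) μ :=
      (iT4.mul_const _).sub (iT6.mul_const _)
    have E4 := hmulE1 (Pi.single j 1) 1
    simp_rw [e]
    rw [integral_add isub (integrable_const _),
      integral_sub (iT4.mul_const _) (iT6.mul_const _),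
      integral_mul_const, integral_mul_const, integral_const, E4, hZ1,
      Lf_moment_one' hγmeas hγ hSX, Lf_mul_moment hγmeas hγ hSX, hVb j,
      mf_single, mf_dot, qf_single_vec]
    simp only [measure_univ, ENNReal.toReal_one, one_smul, smul_eq_mul, probReal_univ, mul_one]
    ring
  rw [hEY k, hEY l]
  simp only [sub_zero]
  -- expand the product pointwise
  have e2 : ∀ ω, Y ω k * Y ω l =
      (Lf ghat (Pi.single k 1) ω * Lf ghat (Pi.single l 1) ω * Ghat ω ^ 2)
          * ((σY ^ 2)⁻¹ * (σY ^ 2)⁻¹)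
      - (Lf ghat (Pi.single k 1) ω * Lf ghat (Pi.single l 1) ω * Lf ghat βstar ω * Ghat ω ^ 1)
          * (2 * ((σY ^ 2)⁻¹ * (σY ^ 2)⁻¹))
      + (Lf ghat (Pi.single k 1) ω * Lf ghat (Pi.single l 1) ω * Lf ghat βstar ω ^ 2)
          * ((σY ^ 2)⁻¹ * (σY ^ 2)⁻¹)
      + (Lf ghat (Pi.single k 1) ω * Ghat ω ^ 1) * ((σY ^ 2)⁻¹ * (V *ᵥ βstar) l)
      - (Lf ghat (Pi.single k 1) ω * Lf ghat βstar ω) * ((σY ^ 2)⁻¹ * (V *ᵥ βstar) l)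
      + (Lf ghat (Pi.single l 1) ω * Ghat ω ^ 1) * ((σY ^ 2)⁻¹ * (V *ᵥ βstar) k)
      - (Lf ghat (Pi.single l 1) ω * Lf ghat βstar ω) * ((σY ^ 2)⁻¹ * (V *ᵥ βstar) k)
      + (V *ᵥ βstar) k * (V *ᵥ βstar) l := by
    intro ω
    rw [hY ω k, hY ω l]
    have h2k : (∑ m, ghat ω k * ghat ω m * βstar m) = ghat ω k * Lf ghat βstar ω := by
      rw [Lf, Finset.mul_sum]
      exact Finset.sum_congr rfl (fun i _ => by ring)
    have h2l : (∑ m, ghat ω l * ghat ω m * βstar m) = ghat ω l * Lf ghat βstar ω := by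
      rw [Lf, Finset.mul_sum]
      exact Finset.sum_congr rfl (fun i _ => by ring)
    rw [h2k, h2l]
    simp only [Lf_single]
    ring
  -- integrability of all the pieces
  have J1 : Integrable (fun ω => Lf ghat (Pi.single k 1) ω * Lf ghat (Pi.single l 1) ω
      * Ghat ω ^ 2) μ :=
    hmulI2 (Pi.single k 1) (Pi.single l 1) 2
  have J2 : Integrable (fun ω => Lf ghat (Pi.single k 1) ω * Lf ghat (Pi.single l 1) ω
      * Lf ghat βstar ω * Ghat ω ^ 1) μ :=
    hmulI3 (Pi.single k 1) (Pi.single l 1) βstar 1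
  have J3 : Integrable (fun ω => Lf ghat (Pi.single k 1) ω * Lf ghat (Pi.single l 1) ω
      * Lf ghat βstar ω ^ 2) μ := Lf_mul2sq_integrable hγmeas hγ hSX _ _ _
  have J4 : Integrable (fun ω => Lf ghat (Pi.single k 1) ω * Ghat ω ^ 1) μ :=
    hmulI1 (Pi.single k 1) 1
  have J5 : Integrable (fun ω => Lf ghat (Pi.single l 1) ω * Ghat ω ^ 1) μ :=
    hmulI1 (Pi.single l 1) 1
  have J6 : Integrable (fun ω => Lf ghat (Pi.single k 1) ω * Lf ghat βstar ω) μ :=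
    Lf_mul_integrable hγmeas hγ hSX _ _
  have J7 : Integrable (fun ω => Lf ghat (Pi.single l 1) ω * Lf ghat βstar ω) μ :=
    Lf_mul_integrable hγmeas hγ hSX _ _
  have t1 := J1.mul_const ((σY ^ 2)⁻¹ * (σY ^ 2)⁻¹)
  have t2 := J2.mul_const (2 * ((σY ^ 2)⁻¹ * (σY ^ 2)⁻¹))
  have t3 := J3.mul_const ((σY ^ 2)⁻¹ * (σY ^ 2)⁻¹)
  have t4 := J4.mul_const ((σY ^ 2)⁻¹ * (V *ᵥ βstar) l)
  have t5 := J6.mul_const ((σY ^ 2)⁻¹ * (V *ᵥ βstar) l)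
  have t6 := J5.mul_const ((σY ^ 2)⁻¹ * (V *ᵥ βstar) k)
  have t7 := J7.mul_const ((σY ^ 2)⁻¹ * (V *ᵥ βstar) k)
  have u1 : Integrable (fun ω =>
      (Lf ghat (Pi.single k 1) ω * Lf ghat (Pi.single l 1) ω * Ghat ω ^ 2)
          * ((σY ^ 2)⁻¹ * (σY ^ 2)⁻¹)
      - (Lf ghat (Pi.single k 1) ω * Lf ghat (Pi.single l 1) ω * Lf ghat βstar ω * Ghat ω ^ 1)
          * (2 * ((σY ^ 2)⁻¹ * (σY ^ 2)⁻¹))) μ := t1.sub t2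
  have u2 : Integrable (fun ω =>
      (Lf ghat (Pi.single k 1) ω * Lf ghat (Pi.single l 1) ω * Ghat ω ^ 2)
          * ((σY ^ 2)⁻¹ * (σY ^ 2)⁻¹)
      - (Lf ghat (Pi.single k 1) ω * Lf ghat (Pi.single l 1) ω * Lf ghat βstar ω * Ghat ω ^ 1)
          * (2 * ((σY ^ 2)⁻¹ * (σY ^ 2)⁻¹))
      + (Lf ghat (Pi.single k 1) ω * Lf ghat (Pi.single l 1) ω * Lf ghat βstar ω ^ 2)
          * ((σY ^ 2)⁻¹ * (σY ^ 2)⁻¹)) μ := u1.add t3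
  have u3 : Integrable (fun ω =>
      (Lf ghat (Pi.single k 1) ω * Lf ghat (Pi.single l 1) ω * Ghat ω ^ 2)
          * ((σY ^ 2)⁻¹ * (σY ^ 2)⁻¹)
      - (Lf ghat (Pi.single k 1) ω * Lf ghat (Pi.single l 1) ω * Lf ghat βstar ω * Ghat ω ^ 1)
          * (2 * ((σY ^ 2)⁻¹ * (σY ^ 2)⁻¹))
      + (Lf ghat (Pi.single k 1) ω * Lf ghat (Pi.single l 1) ω * Lf ghat βstar ω ^ 2)
          * ((σY ^ 2)⁻¹ * (σY ^ 2)⁻¹)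
      + (Lf ghat (Pi.single k 1) ω * Ghat ω ^ 1) * ((σY ^ 2)⁻¹ * (V *ᵥ βstar) l)) μ := u2.add t4
  have u4 : Integrable (fun ω =>
      (Lf ghat (Pi.single k 1) ω * Lf ghat (Pi.single l 1) ω * Ghat ω ^ 2)
          * ((σY ^ 2)⁻¹ * (σY ^ 2)⁻¹)
      - (Lf ghat (Pi.single k 1) ω * Lf ghat (Pi.single l 1) ω * Lf ghat βstar ω * Ghat ω ^ 1)
          * (2 * ((σY ^ 2)⁻¹ * (σY ^ 2)⁻¹))
      + (Lf ghat (Pi.single k 1) ω * Lf ghat (Pi.single l 1) ω * Lf ghat βstar ω ^ 2)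
          * ((σY ^ 2)⁻¹ * (σY ^ 2)⁻¹)
      + (Lf ghat (Pi.single k 1) ω * Ghat ω ^ 1) * ((σY ^ 2)⁻¹ * (V *ᵥ βstar) l)
      - (Lf ghat (Pi.single k 1) ω * Lf ghat βstar ω) * ((σY ^ 2)⁻¹ * (V *ᵥ βstar) l)) μ :=
    u3.sub t5
  have u5 : Integrable (fun ω =>
      (Lf ghat (Pi.single k 1) ω * Lf ghat (Pi.single l 1) ω * Ghat ω ^ 2)
          * ((σY ^ 2)⁻¹ * (σY ^ 2)⁻¹)
      - (Lf ghat (Pi.single k 1) ω * Lf ghat (Pi.single l 1) ω * Lf ghat βstar ω * Ghat ω ^ 1)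
          * (2 * ((σY ^ 2)⁻¹ * (σY ^ 2)⁻¹))
      + (Lf ghat (Pi.single k 1) ω * Lf ghat (Pi.single l 1) ω * Lf ghat βstar ω ^ 2)
          * ((σY ^ 2)⁻¹ * (σY ^ 2)⁻¹)
      + (Lf ghat (Pi.single k 1) ω * Ghat ω ^ 1) * ((σY ^ 2)⁻¹ * (V *ᵥ βstar) l)
      - (Lf ghat (Pi.single k 1) ω * Lf ghat βstar ω) * ((σY ^ 2)⁻¹ * (V *ᵥ βstar) l)
      + (Lf ghat (Pi.single l 1) ω * Ghat ω ^ 1) * ((σY ^ 2)⁻¹ * (V *ᵥ βstar) k)) μ :=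
    u4.add t6
  have u6 : Integrable (fun ω =>
      (Lf ghat (Pi.single k 1) ω * Lf ghat (Pi.single l 1) ω * Ghat ω ^ 2)
          * ((σY ^ 2)⁻¹ * (σY ^ 2)⁻¹)
      - (Lf ghat (Pi.single k 1) ω * Lf ghat (Pi.single l 1) ω * Lf ghat βstar ω * Ghat ω ^ 1)
          * (2 * ((σY ^ 2)⁻¹ * (σY ^ 2)⁻¹))
      + (Lf ghat (Pi.single k 1) ω * Lf ghat (Pi.single l 1) ω * Lf ghat βstar ω ^ 2)
          * ((σY ^ 2)⁻¹ * (σY ^ 2)⁻¹)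
      + (Lf ghat (Pi.single k 1) ω * Ghat ω ^ 1) * ((σY ^ 2)⁻¹ * (V *ᵥ βstar) l)
      - (Lf ghat (Pi.single k 1) ω * Lf ghat βstar ω) * ((σY ^ 2)⁻¹ * (V *ᵥ βstar) l)
      + (Lf ghat (Pi.single l 1) ω * Ghat ω ^ 1) * ((σY ^ 2)⁻¹ * (V *ᵥ βstar) k)
      - (Lf ghat (Pi.single l 1) ω * Lf ghat βstar ω) * ((σY ^ 2)⁻¹ * (V *ᵥ βstar) k)) μ :=
    u5.sub t7
  -- product expectations
  have E1 : ∫ ω, Lf ghat (Pi.single k 1) ω * Lf ghat (Pi.single l 1) ω * Ghat ω ^ 2 ∂μ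
      = (∫ ω, Lf ghat (Pi.single k 1) ω * Lf ghat (Pi.single l 1) ω ∂μ)
        * ∫ ω, Ghat ω ^ 2 ∂μ :=
    hmulE2 (Pi.single k 1) (Pi.single l 1) 2
  have E2 : ∫ ω, Lf ghat (Pi.single k 1) ω * Lf ghat (Pi.single l 1) ω * Lf ghat βstar ω
        * Ghat ω ^ 1 ∂μ
      = (∫ ω, Lf ghat (Pi.single k 1) ω * Lf ghat (Pi.single l 1) ω * Lf ghat βstar ω ∂μ)
        * ∫ ω, Ghat ω ^ 1 ∂μ :=
    hmulE3 (Pi.single k 1) (Pi.single l 1) βstar 1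
  have E4 : ∫ ω, Lf ghat (Pi.single k 1) ω * Ghat ω ^ 1 ∂μ
      = (∫ ω, Lf ghat (Pi.single k 1) ω ∂μ) * ∫ ω, Ghat ω ^ 1 ∂μ :=
    hmulE1 (Pi.single k 1) 1
  have E5 : ∫ ω, Lf ghat (Pi.single l 1) ω * Ghat ω ^ 1 ∂μ
      = (∫ ω, Lf ghat (Pi.single l 1) ω ∂μ) * ∫ ω, Ghat ω ^ 1 ∂μ :=
    hmulE1 (Pi.single l 1) 1
  -- right-hand side rewrites
  have hMV : (Mm + V) k l = (σY ^ 2)⁻¹ * (γ k * γ l) + (σY ^ 2)⁻¹ * SX k l := by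
    rw [hMm, hV]
    simp [Matrix.add_apply, Matrix.smul_apply, Matrix.vecMulVec_apply, smul_eq_mul]
  have hbV : (βstar ᵥ* V) l = (σY ^ 2)⁻¹ * (SX *ᵥ βstar) l := by
    rw [← Matrix.mulVec_transpose, hV, Matrix.transpose_smul, hts, Matrix.smul_mulVec]
    simp
  have hbVb : βstar ⬝ᵥ V *ᵥ βstar = (σY ^ 2)⁻¹ * (βstar ⬝ᵥ SX *ᵥ βstar) := by
    rw [hV, Matrix.smul_mulVec]
    simp [dotProduct_smul]
  have hqββ : qf SX βstar βstar = βstar ⬝ᵥ SX *ᵥ βstar := rfl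
  -- split the integral and evaluate
  simp_rw [e2]
  rw [integral_add u6 (integrable_const _), integral_sub u5 t7, integral_add u4 t6,
    integral_sub u3 t5, integral_add u2 t4, integral_add u1 t3, integral_sub t1 t2,
    integral_mul_const, integral_mul_const, integral_mul_const, integral_mul_const,
    integral_mul_const, integral_mul_const, integral_mul_const, integral_const,
    E1, E2, E4, E5, hZ1, hZ2,
    Lf_mul_moment hγmeas hγ hSX (Pi.single k 1) (Pi.single l 1),
    Lf_mul_moment hγmeas hγ hSX (Pi.single k 1) βstar,
    Lf_mul_moment hγmeas hγ hSX (Pi.single l 1) βstar,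
    Lf_mul3_moment hγmeas hγ hSX (Pi.single k 1) (Pi.single l 1) βstar,
    Lf_mul2sq_moment hγmeas hγ hSX (Pi.single k 1) (Pi.single l 1) βstar,
    Lf_moment_one' hγmeas hγ hSX (Pi.single k 1),
    Lf_moment_one' hγmeas hγ hSX (Pi.single l 1),
    hMV, hbV, hbVb]
  simp only [mf_single, qf_single_single]
  simp only [mf_single, mf_dot, qf_single_single, qf_single_vec, hqββ, hVb,
    measure_univ, ENNReal.toReal_one, one_smul, smul_eq_mul, probReal_univ, mul_one]
  field_simp
  ring
end
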